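/- In game G, every pure Nash equilibrium induces a feasible solution to the user-BS association optimization problem: the set of pairs {(a*_n, n) : a*_n ≠ s} defines a partial injective assignment of users to base stations in which every assigned pair meets the SINR threshold β. -/

import Mathlib

/-!
Silence guarantees a player payoff `0`, so at a pure Nash equilibrium no transmitting user
can be stuck with payoff `-1`. Payoff `1` means exactly that the user's base station is used
by nobody else and that its SINR reaches `β`.
-/

def IsPureNashEquilibrium {ι A : Type*} [DecidableEq ι] (u : (ι → A) → ι → ℝ) (a : ι → A) :
    Prop :=
  ∀ (n : ι) (b : A), u (Function.update a n b) n ≤ u a n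

section TransmissionGame

variable {ι κ : Type*} {success : (ι → Option κ) → ι → κ → Prop}
  [∀ a n m, Decidable (success a n m)] {u : (ι → Option κ) → ι → ℝ}

theorem payoff_nonneg_of_isPureNashEquilibrium [DecidableEq ι]
    (hu : ∀ a n, u a n = (a n).elim 0 (fun m => if success a n m then 1 else -1))
    {a : ι → Option κ} (ha : IsPureNashEquilibrium u a) (n : ι) : 0 ≤ u a n := by
  simpa [hu] using ha n none

theorem success_of_payoff_nonneg
    (hu : ∀ a n, u a n = (a n).elim 0 (fun m => if success a n m then 1 else -1))
    {a : ι → Option κ} {n : ι} {m : κ} (ham : a n = some m) (h : 0 ≤ u a n) :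
    success a n m := by
  rw [hu, ham, Option.elim_some] at h
  by_contra hfail
  rw [if_neg hfail] at h
  linarith

end TransmissionGame

/-- In game G, every pure Nash equilibrium induces a feasible solution of the
user-BS association problem: a partial injective assignment of users to base
stations in which every assigned pair meets the SINR threshold β. -/
theorem stmt_11 (N M : ℕ) (β : ℝ)
    (SINR : (Fin N → Option (Fin M)) → Fin N → Fin M → ℝ)
    (u : (Fin N → Option (Fin M)) → Fin N → ℝ)
    (hu : ∀ a n, u a n = (a n).elim 0 (fun m =>
      if β ≤ SINR a n m ∧ ∀ n', n' ≠ n → a n' ≠ some m then 1 else -1)) :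
    ∀ astar : Fin N → Option (Fin M),
      (∀ (n : Fin N) (b : Option (Fin M)), u (Function.update astar n b) n ≤ u astar n) →
      (∀ n n' : Fin N, astar n ≠ none → astar n = astar n' → n = n') ∧
      (∀ (n : Fin N) (m : Fin M), astar n = some m → β ≤ SINR astar n m) := by
  intro astar hne
  have feasible : ∀ n m, astar n = some m →
      β ≤ SINR astar n m ∧ ∀ n', n' ≠ n → astar n' ≠ some m := fun n _ hm =>
    success_of_payoff_nonneg hu hm (payoff_nonneg_of_isPureNashEquilibrium hu hne n)
  refine ⟨fun n n' hn heq => ?_, fun n m hm => (feasible n m hm).1⟩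
  obtain ⟨m, hm⟩ := Option.ne_none_iff_exists'.mp hn
  by_contra hnn
  exact (feasible n m hm).2 n' (Ne.symm hnn) (heq ▸ hm)
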